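/- Let $c > 0$ and $\lambda < 0$. Suppose $\xi : [0,\infty) \to \mathbb{R}$ is twice continuously differentiable, satisfies $\xi''(z) - \frac{3}{z+c}\,\xi'(z) + \lambda\,\xi(z) = 0$ for all $z \geq 0$, satisfies the Neumann boundary condition $\xi'(0) = 0$, and satisfies $\int_0^\infty (z+c)^{-3}\,\xi(z)^2\,dz < \infty$. Then $\xi$ is identically zero. -/

import Mathlib

open Set Real MeasureTheory

open Filter Topology

set_option maxHeartbeats 1000000 in
/-- No negative-eigenvalue bound states for the Randall-Sundrum II problem: if `c > 0`,
`λ < 0`, and a C² function on `[0,∞)` satisfies `ξ'' - 3/(z+c) ξ' + λ ξ = 0`, the Neumann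
condition `ξ'(0) = 0`, and is square-integrable with respect to `(z+c)⁻³ dz`,
then `ξ ≡ 0`. -/
theorem randallSundrum_no_negative_bound_states
    (c lam : ℝ) (hc : 0 < c) (hlam : lam < 0) (ξ : ℝ → ℝ)
    (hξ : ContDiffOn ℝ 2 ξ (Ici 0))
    (hode : ∀ z ≥ (0:ℝ),
      deriv (deriv ξ) z - (3/(z+c)) * deriv ξ z + lam * ξ z = 0)
    (hneu : deriv ξ 0 = 0)
    (hint : IntegrableOn (fun z => ((z+c)^3)⁻¹ * ξ z ^ 2) (Ici 0)) :
    ∀ z ≥ (0:ℝ), ξ z = 0 := by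
  -- basic positivity
  have hzc : ∀ z : ℝ, 0 < z → 0 < z + c := fun z hz => by linarith
  -- C² on the open half line
  have hξo : ContDiffOn ℝ 2 ξ (Ioi 0) := hξ.mono Ioi_subset_Ici_self
  have hC1 : ContDiffOn ℝ 1 (deriv ξ) (Ioi 0) :=
    hξo.deriv_of_isOpen isOpen_Ioi (by norm_num)
  have hdξ : ∀ z ∈ Ioi (0:ℝ), HasDerivAt ξ (deriv ξ z) z := by
    intro z hz
    exact (((hξo z hz).differentiableWithinAt (by norm_num)).differentiableAt
      (isOpen_Ioi.mem_nhds hz)).hasDerivAt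
  have hdξ' : ∀ z ∈ Ioi (0:ℝ), HasDerivAt (deriv ξ) (deriv (deriv ξ) z) z := by
    intro z hz
    exact (((hC1 z hz).differentiableWithinAt (by norm_num)).differentiableAt
      (isOpen_Ioi.mem_nhds hz)).hasDerivAt
  -- the flux function
  set F : ℝ → ℝ := fun z => ((z+c)^3)⁻¹ * (deriv ξ z * ξ z) with hFdef
  have hF : ∀ z ∈ Ioi (0:ℝ),
      HasDerivAt F (((z+c)^3)⁻¹ * ((deriv ξ z)^2 - lam * (ξ z)^2)) z := by
    intro z hz
    have hzc' : (0:ℝ) < z + c := hzc z hz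
    have h1 : HasDerivAt (fun w : ℝ => w + c) 1 z := (hasDerivAt_id z).add_const c
    have h2 : HasDerivAt (fun w : ℝ => (w+c)^3) (3*(z+c)^2) z := by
      simpa using h1.fun_pow 3
    have h3 : HasDerivAt (fun w : ℝ => ((w+c)^3)⁻¹)
        (-(3*(z+c)^2) / ((z+c)^3)^2) z := h2.inv (pow_ne_zero _ hzc'.ne')
    have h4 := hdξ z hz
    have h5 := hdξ' z hz
    have hmul := h3.fun_mul (h5.fun_mul h4)
    have hode' : deriv (deriv ξ) z = (3/(z+c)) * deriv ξ z - lam * ξ z := by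
      have := hode z (le_of_lt hz); linarith
    refine hmul.congr_deriv ?_
    rw [hode']
    field_simp
    ring
  have hFdiff : ∀ z ∈ Ioi (0:ℝ), DifferentiableAt ℝ F z :=
    fun z hz => (hF z hz).differentiableAt
  have hFderiv_nonneg : ∀ z ∈ Ioi (0:ℝ), 0 ≤ deriv F z := by
    intro z hz
    rw [(hF z hz).deriv]
    have h1 : (0:ℝ) ≤ ((z+c)^3)⁻¹ := le_of_lt (inv_pos.mpr (pow_pos (hzc z hz) 3))
    have h2 : (0:ℝ) ≤ (deriv ξ z)^2 - lam * (ξ z)^2 := by nlinarith [sq_nonneg (deriv ξ z), sq_nonneg (ξ z)]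
    exact mul_nonneg h1 h2
  have hFmono : MonotoneOn F (Ioi 0) := by
    apply monotoneOn_of_deriv_nonneg (convex_Ioi 0)
    · exact fun z hz => (hFdiff z hz).continuousAt.continuousWithinAt
    · rw [interior_Ioi]; exact fun z hz => (hFdiff z hz).differentiableWithinAt
    · rw [interior_Ioi]; exact hFderiv_nonneg
  -- limit of F at 0⁺ is 0
  have hglim : Tendsto (deriv ξ) (𝓝[>] 0) (𝓝 (derivWithin ξ (Ici 0) 0)) := by
    have hgc : ContinuousOn (derivWithin ξ (Ici 0)) (Ici 0) :=
      hξ.continuousOn_derivWithin (uniqueDiffOn_Ici 0) (by norm_num)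
    have h0 : Tendsto (derivWithin ξ (Ici 0)) (𝓝[>] 0) (𝓝 (derivWithin ξ (Ici 0) 0)) :=
      ((hgc 0 self_mem_Ici).tendsto).mono_left (nhdsWithin_mono 0 Ioi_subset_Ici_self)
    refine h0.congr' ?_
    filter_upwards [self_mem_nhdsWithin] with z hz
    exact derivWithin_of_mem_nhds (mem_of_superset (isOpen_Ioi.mem_nhds hz)
      Ioi_subset_Ici_self)
  -- the boundary value vanishes
  have hg0 : derivWithin ξ (Ici 0) 0 * ξ 0 = 0 := by
    by_cases hx0 : ξ 0 = 0
    · rw [hx0, mul_zero]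
    · have hode0 := hode 0 le_rfl
      have h2nd : deriv (deriv ξ) 0 = -(lam * ξ 0) := by
        rw [hneu] at hode0; linarith
      have hne : deriv (deriv ξ) 0 ≠ 0 := by
        rw [h2nd]
        intro h
        have hmz : lam * ξ 0 = 0 := by linarith
        rcases mul_eq_zero.mp hmz with h' | h'
        · exact absurd h' (ne_of_lt hlam)
        · exact hx0 h'
      have hdiff : DifferentiableAt ℝ (deriv ξ) 0 := by
        by_contra hnd
        exact hne (deriv_zero_of_not_differentiableAt hnd)
      have hcont : Tendsto (deriv ξ) (𝓝[>] 0) (𝓝 0) := by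
        have h := hdiff.continuousAt.tendsto
        rw [hneu] at h
        exact h.mono_left nhdsWithin_le_nhds
      rw [tendsto_nhds_unique hglim hcont, zero_mul]
  -- F tends to 0 at 0⁺
  have hFlim : Tendsto F (𝓝[>] (0:ℝ)) (𝓝 0) := by
    have hξ0 : Tendsto ξ (𝓝[>] (0:ℝ)) (𝓝 (ξ 0)) :=
      ((hξ.continuousOn 0 self_mem_Ici).tendsto).mono_left
        (nhdsWithin_mono 0 Ioi_subset_Ici_self)
    have hinv : Tendsto (fun z : ℝ => ((z+c)^3)⁻¹) (𝓝[>] (0:ℝ)) (𝓝 (((0+c)^3)⁻¹)) := by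
      have hca : ContinuousAt (fun z : ℝ => ((z+c)^3)⁻¹) 0 := by
        apply ContinuousAt.inv₀
        · exact (((continuous_id.add continuous_const).pow 3)).continuousAt
        · have : (0:ℝ) < 0 + c := by linarith
          positivity
      exact hca.tendsto.mono_left nhdsWithin_le_nhds
    have hall := hinv.mul (hglim.mul hξ0)
    rw [hg0, mul_zero] at hall
    exact hall
  have hFnonneg : ∀ z ∈ Ioi (0:ℝ), 0 ≤ F z := by
    intro z hz
    refine le_of_tendsto hFlim ?_
    filter_upwards [Ioo_mem_nhdsGT_of_mem (left_mem_Ico.mpr hz)] with w hw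
    exact hFmono hw.1 hz (le_of_lt hw.2)
  -- ξ² is nondecreasing on (0,∞)
  have hsqd : ∀ z ∈ Ioi (0:ℝ), HasDerivAt (fun w => ξ w ^ 2) (2 * ξ z * deriv ξ z) z := by
    intro z hz
    have := (hdξ z hz).fun_pow 2
    simpa using this
  have hprod : ∀ z ∈ Ioi (0:ℝ), deriv ξ z * ξ z = (z+c)^3 * F z := by
    intro z hz
    have hzc' : ((z:ℝ)+c)^3 ≠ 0 := (pow_pos (hzc z hz) 3).ne'
    rw [hFdef]
    field_simp
    exact (mul_div_cancel_right₀ _ (hzc z hz).ne').symm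
  have hsq : MonotoneOn (fun w => ξ w ^ 2) (Ioi 0) := by
    apply monotoneOn_of_deriv_nonneg (convex_Ioi 0)
    · exact fun z hz => ((hsqd z hz).differentiableAt).continuousAt.continuousWithinAt
    · rw [interior_Ioi]
      exact fun z hz => ((hsqd z hz).differentiableAt).differentiableWithinAt
    · rw [interior_Ioi]
      intro z hz
      rw [(hsqd z hz).deriv]
      have h1 := hFnonneg z hz
      have h2 : deriv ξ z * ξ z = (z+c)^3 * F z := hprod z hz
      nlinarith [pow_pos (hzc z hz) 3]
  -- suppose ξ is not identically zero
  intro z hz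
  by_contra hznz
  obtain ⟨z₀, hz₀pos, hz₀ne⟩ : ∃ z₀ : ℝ, 0 < z₀ ∧ ξ z₀ ≠ 0 := by
    rcases eq_or_lt_of_le hz with h0 | h0
    · have hcξ : Tendsto ξ (𝓝[>] (0:ℝ)) (𝓝 (ξ 0)) :=
        ((hξ.continuousOn 0 self_mem_Ici).tendsto).mono_left
          (nhdsWithin_mono 0 Ioi_subset_Ici_self)
      subst h0
      have hev : ∀ᶠ w in 𝓝[>] (0:ℝ), ξ w ≠ 0 := hcξ.eventually_ne hznz
      obtain ⟨w, hw1, hw2⟩ := (hev.and eventually_mem_nhdsWithin).exists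
      exact ⟨w, hw2, hw1⟩
    · exact ⟨z, h0, hznz⟩
  set a := ξ z₀ ^ 2 with ha
  have hapos : 0 < a := by
    have hne : a ≠ 0 := pow_ne_zero 2 hz₀ne
    exact lt_of_le_of_ne (sq_nonneg _) (Ne.symm hne)
  clear_value a
  have hmlam : (0:ℝ) < -lam := neg_pos.mpr hlam
  have hsq_ge : ∀ w, z₀ ≤ w → a ≤ ξ w ^ 2 := by
    intro w hw
    rw [ha]
    exact hsq hz₀pos (lt_of_lt_of_le hz₀pos hw) hw
  -- ψ is nondecreasing on [z₀,∞)
  set ψ : ℝ → ℝ := fun w => F w + (-lam) * (a/2) * ((w+c)^2)⁻¹ with hψdef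
  have hψhas : ∀ w ∈ Ioi (0:ℝ), HasDerivAt ψ
      (((w+c)^3)⁻¹ * ((deriv ξ w)^2 - lam * (ξ w)^2)
        + (-lam) * (a/2) * (-(2*(w+c)) / ((w+c)^2)^2)) w := by
    intro w hw
    have hwc : (0:ℝ) < w + c := hzc w hw
    have h1 : HasDerivAt (fun v : ℝ => v + c) 1 w := (hasDerivAt_id w).add_const c
    have h2 : HasDerivAt (fun v : ℝ => (v+c)^2) (2*(w+c)) w := by
      simpa using h1.fun_pow 2
    have h3 : HasDerivAt (fun v : ℝ => ((v+c)^2)⁻¹) (-(2*(w+c)) / ((w+c)^2)^2) w :=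
      h2.inv (pow_ne_zero _ hwc.ne')
    exact (hF w hw).add (h3.const_mul ((-lam) * (a/2)))
  have hψmono : MonotoneOn ψ (Ici z₀) := by
    apply monotoneOn_of_deriv_nonneg (convex_Ici z₀)
    · intro w hw
      exact ((hψhas w (lt_of_lt_of_le hz₀pos hw)).differentiableAt).continuousAt.continuousWithinAt
    · rw [interior_Ici]
      intro w hw
      exact ((hψhas w (lt_trans hz₀pos hw)).differentiableAt).differentiableWithinAt
    · rw [interior_Ici]
      intro w hw
      have hw0 : (0:ℝ) < w := lt_trans hz₀pos hw
      have hwc : (0:ℝ) < w + c := hzc w hw0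
      rw [(hψhas w hw0).deriv]
      have key : ((w+c)^3)⁻¹ * ((deriv ξ w)^2 - lam * (ξ w)^2)
          + (-lam) * (a/2) * (-(2*(w+c)) / ((w+c)^2)^2)
          = ((w+c)^3)⁻¹ * ((deriv ξ w)^2 - lam * ((ξ w)^2 - a)) := by
        field_simp
        ring
      rw [key]
      have hge : a ≤ (ξ w)^2 := hsq_ge w (le_of_lt hw)
      have h1 : (0:ℝ) ≤ ((w+c)^3)⁻¹ := le_of_lt (inv_pos.mpr (pow_pos hwc 3))
      have h2 : (0:ℝ) ≤ (deriv ξ w)^2 - lam * ((ξ w)^2 - a) := by nlinarith [sq_nonneg (deriv ξ w)]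
      exact mul_nonneg h1 h2
  -- a positive lower bound for F far out
  set δ : ℝ := (-lam) * (a/4) * ((z₀+c)^2)⁻¹ with hδdef
  have hz₀c : (0:ℝ) < z₀ + c := by linarith
  have hδpos : 0 < δ :=
    mul_pos (mul_pos hmlam (by linarith)) (inv_pos.mpr (pow_pos hz₀c 2))
  clear_value δ
  set z₂ : ℝ := 2*z₀ + c with hz₂def
  have hz₂pos : 0 < z₂ := by simp only [hz₂def]; linarith
  clear_value z₂
  have hFge : ∀ w, z₂ ≤ w → δ ≤ F w := by
    intro w hww
    have hz0w : z₀ ≤ w := by simp only [hz₂def] at hww; linarith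
    have hw0 : (0:ℝ) < w := lt_of_lt_of_le hz₀pos hz0w
    have hwc : (0:ℝ) < w + c := hzc w hw0
    have hmono := hψmono self_mem_Ici (mem_Ici.mpr hz0w) hz0w
    have hFz₀ : 0 ≤ F z₀ := hFnonneg z₀ hz₀pos
    have hinvle : ((w+c)^2)⁻¹ ≤ ((z₀+c)^2)⁻¹ / 2 := by
      have hle : 2*(z₀+c)^2 ≤ (w+c)^2 := by nlinarith
      have := inv_anti₀ (by positivity : (0:ℝ) < 2*(z₀+c)^2) hle
      calc ((w+c)^2)⁻¹ ≤ (2*(z₀+c)^2)⁻¹ := this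
        _ = ((z₀+c)^2)⁻¹ / 2 := by rw [mul_inv]; ring
    have hfac : (0:ℝ) ≤ (-lam) * (a/2) := mul_nonneg (le_of_lt hmlam) (by linarith)
    have h2 : ((z₀+c)^2)⁻¹ / 2 ≤ ((z₀+c)^2)⁻¹ - ((w+c)^2)⁻¹ := by
      have hinv0 : (0:ℝ) ≤ ((w+c)^2)⁻¹ := le_of_lt (inv_pos.mpr (pow_pos hwc 2))
      linarith
    have h3 : (-lam) * (a/2) * (((z₀+c)^2)⁻¹ / 2)
        ≤ (-lam) * (a/2) * (((z₀+c)^2)⁻¹ - ((w+c)^2)⁻¹) :=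
      mul_le_mul_of_nonneg_left h2 hfac
    have h4 : δ = (-lam) * (a/2) * (((z₀+c)^2)⁻¹ / 2) := by rw [hδdef]; ring
    have h5 : ψ z₀ ≤ ψ w := hmono
    simp only [hψdef] at h5
    nlinarith
  -- quartic growth of ξ²
  set z₃ : ℝ := 2*z₂ + c with hz₃def
  clear_value z₃
  have hχhas : ∀ w ∈ Ioi (0:ℝ), HasDerivAt (fun v => ξ v ^ 2 - (δ/2)*(v+c)^4)
      (2 * ξ w * deriv ξ w - (δ/2)*(4*(w+c)^3)) w := by
    intro w hw
    have h1 : HasDerivAt (fun v : ℝ => v + c) 1 w := (hasDerivAt_id w).add_const c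
    have h2 : HasDerivAt (fun v : ℝ => (v+c)^4) (4*(w+c)^3) w := by
      simpa using h1.fun_pow 4
    exact (hsqd w hw).sub (h2.const_mul (δ/2))
  have hχmono : MonotoneOn (fun v => ξ v ^ 2 - (δ/2)*(v+c)^4) (Ici z₂) := by
    apply monotoneOn_of_deriv_nonneg (convex_Ici z₂)
    · intro w hw
      exact ((hχhas w (lt_of_lt_of_le hz₂pos hw)).differentiableAt).continuousAt.continuousWithinAt
    · rw [interior_Ici]
      intro w hw
      exact ((hχhas w (lt_trans hz₂pos hw)).differentiableAt).differentiableWithinAt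
    · rw [interior_Ici]
      intro w hw
      have hw0 : (0:ℝ) < w := lt_trans hz₂pos hw
      rw [(hχhas w hw0).deriv]
      have h1 : deriv ξ w * ξ w = (w+c)^3 * F w := hprod w hw0
      have h2 : δ ≤ F w := hFge w (le_of_lt hw)
      have h3 : (0:ℝ) < (w+c)^3 := pow_pos (hzc w hw0) 3
      nlinarith
  have hgrow : ∀ w, z₃ ≤ w → (δ/4) * c ≤ ((w+c)^3)⁻¹ * ξ w ^ 2 := by
    intro w hww
    have hz2w : z₂ ≤ w := by simp only [hz₃def] at hww; linarith
    have hw0 : (0:ℝ) < w := lt_of_lt_of_le hz₂pos hz2w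
    have hwc : (0:ℝ) < w + c := hzc w hw0
    have hz₂c : (0:ℝ) < z₂ + c := by linarith
    have h1 := hχmono self_mem_Ici (mem_Ici.mpr hz2w) hz2w
    simp only at h1
    have h2 : (0:ℝ) ≤ ξ z₂ ^ 2 := sq_nonneg _
    have h3 : 2*(z₂+c)^4 ≤ (w+c)^4 := by
      have hle : 2*(z₂+c) ≤ w + c := by simp only [hz₃def] at hww; linarith
      have h3a : (2*(z₂+c))^4 ≤ (w+c)^4 := pow_le_pow_left₀ (by linarith) hle 4
      nlinarith [pow_pos hz₂c 4]
    have h4 : (δ/4)*(w+c)^4 ≤ ξ w ^ 2 := by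
      nlinarith [mul_le_mul_of_nonneg_left h3 (le_of_lt hδpos)]
    have h5 : ((w+c)^3)⁻¹ * ((δ/4)*(w+c)^4) = (δ/4)*(w+c) := by
      field_simp
    have h6 : (0:ℝ) ≤ ((w+c)^3)⁻¹ := le_of_lt (inv_pos.mpr (pow_pos hwc 3))
    calc (δ/4)*c ≤ (δ/4)*(w+c) := by nlinarith [hδpos, hw0]
      _ = ((w+c)^3)⁻¹ * ((δ/4)*(w+c)^4) := h5.symm
      _ ≤ ((w+c)^3)⁻¹ * ξ w ^ 2 := mul_le_mul_of_nonneg_left h4 h6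
  -- contradiction with integrability
  have hz₃nonneg : (0:ℝ) ≤ z₃ := by simp only [hz₃def, hz₂def]; linarith
  have hint3 : IntegrableOn (fun w => ((w+c)^3)⁻¹ * ξ w ^ 2) (Ici z₃) :=
    hint.mono_set (Ici_subset_Ici.mpr hz₃nonneg)
  have hεpos : (0:ℝ) < (δ/4) * c := mul_pos (by linarith) hc
  have hconst : IntegrableOn (fun _ : ℝ => (δ/4) * c) (Ici z₃) := by
    apply Integrable.mono' hint3 aestronglyMeasurable_const
    filter_upwards [ae_restrict_mem measurableSet_Ici] with w hw
    rw [Real.norm_eq_abs, abs_of_nonneg (le_of_lt hεpos)]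
    exact hgrow w hw
  rcases (integrableOn_const_iff (C := (δ/4) * c)).mp hconst with h | h
  · exact absurd (enorm_eq_zero.mp h) hεpos.ne'
  · rw [Real.volume_Ici] at h
    exact absurd h (by simp)
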